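/- arXiv:1602.05149 — 2 statements merged into one kernel-verified Lean document; each statement's English description precedes it below -/
import Mathlib

section
/- Let λ₁, ..., λ_m : ℝ → ℝ be continuously differentiable functions on a compact interval. Then the set of points where Λ(x) = max_{i=1,...,m} λ_i(x) fails to be differentiable is countable. -/
/-!
At an interior point `x`, `Λ` coincides near `x` with the maximum of those `λ_i` that attain
the maximum at `x`, and a maximum of functions with a common value and a common derivative at `x`
is differentiable there with that derivative. So `Λ` can fail to be differentiable at `x` only if
some `λ_i - λ_j` vanishes at `x` with nonzero derivative; such zeros are isolated, hence
countable.
-/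

open Filter Set Topology Asymptotics

section MaxDeriv

variable {E : Type*} [NormedAddCommGroup E] [NormedSpace ℝ E] {f g : E → ℝ} {f' g' : E →L[ℝ] ℝ}
  {x : E}

theorem HasFDerivAt.max_of_eq (hf : HasFDerivAt f f' x) (hg : HasFDerivAt g f' x)
    (hfg : f x = g x) : HasFDerivAt (fun y => max (f y) (g y)) f' x := by
  refine .of_isLittleO <| IsBigO.trans_isLittleO (isBigO_of_le _ fun y => ?_)
    (hf.isLittleO.norm_left.add hg.isLittleO.norm_left)
  have key : max (f y) (g y) - max (f x) (g x) - f' (y - x)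
      = max (f y) (g y) - max (f x + f' (y - x)) (g x + f' (y - x)) := by
    rw [← hfg, max_self, max_self]; ring
  rw [key, Real.norm_eq_abs, Real.norm_of_nonneg (by positivity)]
  calc _ ≤ max |f y - (f x + f' (y - x))| |g y - (g x + f' (y - x))| :=
        abs_max_sub_max_le_max _ _ _ _
    _ ≤ _ := by
        simp only [sub_add_eq_sub_sub, ← Real.norm_eq_abs]
        exact max_le_add_of_nonneg (norm_nonneg _) (norm_nonneg _)

theorem HasFDerivAt.max_of_lt (hg : HasFDerivAt g g' x) (hf : ContinuousAt f x)
    (hfg : f x < g x) : HasFDerivAt (fun y => max (f y) (g y)) g' x :=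
  hg.congr_of_eventuallyEq <| (hf.eventually_lt hg.continuousAt hfg).mono fun _ hy =>
    max_eq_right hy.le

variable {ι : Type*} {F : ι → E → ℝ} {F' : ι → E →L[ℝ] ℝ}

theorem Finset.exists_hasFDerivAt_sup' (hF : ∀ i, HasFDerivAt (F i) (F' i) x)
    (hties : ∀ i j, F i x = F j x → F' i = F' j) (s : Finset ι) (hs : s.Nonempty) :
    ∃ i ∈ s, s.sup' hs (F · x) = F i x ∧ HasFDerivAt (fun y => s.sup' hs (F · y)) (F' i) x := by
  induction hs using Finset.Nonempty.cons_induction with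
  | singleton a => exact ⟨a, mem_singleton_self a, rfl, hF a⟩
  | cons a s ha hs ih =>
    obtain ⟨i, hi, hsup, hderiv⟩ := ih
    simp only [sup'_cons hs, mem_cons, exists_eq_or_imp]
    rcases lt_trichotomy (F a x) (s.sup' hs (F · x)) with hlt | heq | hgt
    · exact .inr ⟨i, hi, by rw [max_eq_right hlt.le, hsup],
        hderiv.max_of_lt (hF a).continuousAt hlt⟩
    · refine .inr ⟨i, hi, by rw [heq, max_self, hsup], ?_⟩
      rw [← hties a i (heq.trans hsup)] at hderiv ⊢
      exact (hF a).max_of_eq hderiv heq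
    · refine .inl ⟨max_eq_left hgt.le, ?_⟩
      simpa only [max_comm (F a _)] using (hF a).max_of_lt hderiv.continuousAt hgt

end MaxDeriv

theorem countable_setOf_eq_zero_deriv_ne_zero {F : Type*} [NormedAddCommGroup F]
    [NormedSpace ℝ F] (f : ℝ → F) :
    {x | DifferentiableAt ℝ f x ∧ f x = 0 ∧ deriv f x ≠ 0}.Countable := by
  refine (HereditarilyLindelofSpace.isLindelof _).countable_of_isDiscrete <|
    isDiscrete_iff_nhdsNE.2 fun x hx => ?_
  obtain ⟨hdiff, -, hderiv⟩ := hx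
  rw [← disjoint_iff, disjoint_principal_right]
  filter_upwards [hdiff.hasDerivAt.eventually_ne (c := 0) hderiv] with y hy hyS
  exact hy hyS.2.1

theorem countable_setOf_eq_deriv_ne {F : Type*} [NormedAddCommGroup F] [NormedSpace ℝ F]
    (f g : ℝ → F) :
    {x | DifferentiableAt ℝ f x ∧ DifferentiableAt ℝ g x ∧ f x = g x ∧
      deriv f x ≠ deriv g x}.Countable :=
  (countable_setOf_eq_zero_deriv_ne_zero (f - g)).mono fun _ ⟨hf, hg, hfg, hderiv⟩ =>
    show _ ∧ _ from ⟨hf.sub hg, sub_eq_zero.2 hfg, by rwa [deriv_sub hf hg, sub_ne_zero]⟩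

/-- The pointwise maximum of finitely many C¹ functions on a compact interval
fails to be differentiable only on a countable set. -/
theorem stmt1 (m : ℕ) (lam : Fin (m + 1) → ℝ → ℝ) (a b : ℝ)
    (hC1 : ∀ i, ContDiffOn ℝ 1 (lam i) (Set.Icc a b)) :
    Set.Countable {x ∈ Set.Icc a b |
      ¬ DifferentiableAt ℝ (fun y => ⨆ i, lam i y) x} := by
  have hdiff : ∀ i, ∀ x ∈ Ioo a b, DifferentiableAt ℝ (lam i) x := fun i x hx =>
    ((hC1 i).differentiableOn one_ne_zero x (Ioo_subset_Icc_self hx)).differentiableAt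
      (Icc_mem_nhds hx.1 hx.2)
  have hcrossings := countable_iUnion fun i => countable_iUnion fun j =>
    countable_setOf_eq_deriv_ne (lam i) (lam j)
  refine (((countable_singleton a).union (countable_singleton b)).union hcrossings).mono ?_
  rintro x ⟨hx, hnotdiff⟩
  simp only [mem_union, mem_singleton_iff, mem_iUnion, mem_ofPred_eq]
  by_contra! hgood
  obtain ⟨⟨hxa, hxb⟩, hties⟩ := hgood
  have hxI : x ∈ Ioo a b := ⟨hx.1.lt_of_ne' hxa, hx.2.lt_of_ne hxb⟩
  obtain ⟨i, -, -, hsup⟩ := Finset.univ.exists_hasFDerivAt_sup'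
    (fun i => (hdiff i x hxI).hasFDerivAt)
    (fun i j hij => by rw [← toSpanSingleton_deriv, ← toSpanSingleton_deriv,
      hties i j (hdiff i x hxI) (hdiff j x hxI) hij]) Finset.univ_nonempty
  simp only [Finset.sup'_univ_eq_ciSup] at hsup
  exact hnotdiff hsup.differentiableAt
end

section
/- Let Z be a standard multivariate normal vector in ℝ^q, let m ∈ ℝ^{q+1}, and let C be a (q+1)×q real matrix with pairwise distinct rows. Then almost surely the vector m + C Z has a unique maximal coordinate, i.e., the argmax over coordinates of (m + C Z)_i is a singleton almost surely. -/
/-!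
For `i ≠ j` the tie `(m + C z)ᵢ = (m + C z)ⱼ` is an affine hyperplane with nonzero normal
`Cᵢ - Cⱼ`. Slicing along a coordinate where the normal does not vanish, each slice is a single
point, so by Fubini the hyperplane is null for any product of atomless measures, in particular for
the standard Gaussian. Off the countably many ties the coordinates of `m + C z` are pairwise
distinct, and then the maximum is attained exactly once.
-/

open ProbabilityTheory MeasureTheory

namespace MeasureTheory.Measure

theorem pi_dotProduct_hyperplane {q : ℕ} (μ : Fin q → Measure ℝ) [∀ k, SigmaFinite (μ k)]
    [∀ k, NullSingletonClass (μ k)] {c : Fin q → ℝ} (hc : c ≠ 0) (d : ℝ) :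
    Measure.pi μ {z | c ⬝ᵥ z = d} = 0 := by
  obtain ⟨k₀, hk₀⟩ := Function.ne_iff.mp hc
  cases q with
  | zero => exact k₀.elim0
  | succ n =>
    have hS : MeasurableSet {z : Fin (n + 1) → ℝ | c ⬝ᵥ z = d} :=
      measurableSet_eq_fun (by fun_prop) measurable_const
    rw [← (measurePreserving_piFinSuccAbove μ k₀).symm.measure_preimage_equiv,
      prod_apply_symm ((MeasurableEquiv.piFinSuccAbove _ k₀).symm.measurable hS)]
    refine lintegral_eq_zero_of_ae_eq_zero (ae_of_all _ fun y => ?_)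
    refine Set.Subsingleton.measure_zero (fun x₁ hx₁ x₂ hx₂ => ?_) _
    simp only [Set.mem_preimage, MeasurableEquiv.piFinSuccAbove_symm_apply, Set.mem_ofPred_eq,
      Fin.insertNthEquiv_apply, dotProduct, Fin.sum_univ_succAbove _ k₀, Fin.insertNth_apply_same,
      Fin.insertNth_apply_succAbove] at hx₁ hx₂
    exact mul_left_cancel₀ hk₀ (by linarith)

theorem ae_pi_injective_affine {ι : Type*} [Countable ι] {q : ℕ}
    (μ : Fin q → Measure ℝ) [∀ k, SigmaFinite (μ k)] [∀ k, NullSingletonClass (μ k)]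
    (m : ι → ℝ) {C : ι → Fin q → ℝ} (hC : Function.Injective C) :
    ∀ᵐ z ∂Measure.pi μ, Function.Injective fun i => m i + C i ⬝ᵥ z := by
  have hnoTie : ∀ i j, i ≠ j → ∀ᵐ z ∂Measure.pi μ, (C i - C j) ⬝ᵥ z ≠ m j - m i :=
    fun i j hij => measure_eq_zero_iff_ae_notMem.mp <|
      pi_dotProduct_hyperplane μ (sub_ne_zero.mpr (hC.ne hij)) _
  filter_upwards [ae_all_iff.mpr fun i => ae_all_iff.mpr fun j =>
      Filter.eventually_imp_distrib_left.mpr (hnoTie i j)] with z hz i j hval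
  by_contra hij
  exact hz i j hij (by rw [sub_dotProduct]; linarith)

end MeasureTheory.Measure

theorem existsUnique_forall_le_of_injective {ι β : Type*} [Finite ι] [Nonempty ι] [LinearOrder β]
    {f : ι → β} (hf : Function.Injective f) : ∃! i, ∀ j, f j ≤ f i := by
  obtain ⟨i, hi⟩ := Finite.exists_max f
  exact ⟨i, hi, fun j hj => hf (le_antisymm (hi j) (hj i))⟩

/-- If the rows of `C` are pairwise distinct, then almost surely (over a
standard multivariate normal `Z`) the vector `m + C Z` has a unique maximal
coordinate. -/
theorem stmt7 (q : ℕ) (m : Fin (q + 1) → ℝ) (C : Fin (q + 1) → Fin q → ℝ)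
    (hC : ∀ i j, i ≠ j → C i ≠ C j) :
    ∀ᵐ z ∂(Measure.pi fun _ : Fin q => gaussianReal 0 1),
      ∃! i : Fin (q + 1),
        ∀ j, m j + ∑ k, C j k * z k ≤ m i + ∑ k, C i k * z k := by
  have : NullSingletonClass (gaussianReal 0 1) := nullSingletonClass_gaussianReal one_ne_zero
  filter_upwards [Measure.ae_pi_injective_affine _ m fun i j => not_imp_not.mp (hC i j)]
    with z hz
  exact existsUnique_forall_le_of_injective hz
end
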